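/- Let A be a k×p complex matrix of rank r (with r ≥ 1, r < p, r ≤ k), let B be the Moore–Penrose inverse of A (i.e. the unique p×k matrix with ABA = A, BAB = B, (AB)* = AB, (BA)* = BA), let ℓ = p − r, and let M be a p×ℓ complex matrix with M*M = I whose columns span the kernel of A. Consider the linear map Φ : M_{k,p}(ℂ) → M_{p,ℓ}(ℂ) given by Φ(Ȧ) = −B Ȧ M, where both spaces carry the Frobenius Hermitian inner product. Then the operator norm of Φ equals ‖B‖, the operator (spectral) norm of B; in particular the condition number of the kernel-finding problem is κ(A, M) = ‖A†‖. -/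

import Mathlib

/-!
Multiplying by `B` on the left acts column by column, so `‖B X‖_F ≤ ‖B‖ ‖X‖_F`; multiplying by
`M` on the right cannot increase the Frobenius norm, because `‖M‖² = ‖Mᴴ M‖ = ‖1‖ ≤ 1` by the
C*-identity. Hence `‖B X M‖_F ≤ ‖B‖` whenever `‖X‖_F = 1`. Equality holds for the rank-one
matrix `X = v m₀ᴴ`, where `v` is a unit vector with `‖B v‖ = ‖B‖` (the unit sphere is compact)
and `m₀` is a column of `M`: orthonormality of the columns gives `B X M = (B v) e₀ᵀ`.
-/

open Matrix WithLp

theorem ContinuousLinearMap.exists_norm_eq_one_norm_apply_eq_opNorm {𝕜 E F : Type*} [RCLike 𝕜]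
    [NormedAddCommGroup E] [NormedSpace 𝕜 E] [FiniteDimensional 𝕜 E] [Nontrivial E]
    [NormedAddCommGroup F] [NormedSpace 𝕜 F] (f : E →L[𝕜] F) :
    ∃ x, ‖x‖ = 1 ∧ ‖f x‖ = ‖f‖ := by
  let _ : NormedSpace ℝ E := NormedSpace.restrictScalars ℝ 𝕜 E
  have _ : ProperSpace E := FiniteDimensional.proper_rclike 𝕜 E
  obtain ⟨x, hx, hfx⟩ := ((isCompact_sphere (0 : E) 1).image (by fun_prop)).sSup_mem
    ((NormedSpace.sphere_nonempty.2 zero_le_one).image fun x => ‖f x‖)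
  exact ⟨x, mem_sphere_zero_iff_norm.1 hx, hfx.trans f.sSup_sphere_eq_norm⟩

namespace Matrix

variable {𝕜 l m n p : Type*} [RCLike 𝕜]

theorem norm_toLp_conjTranspose_apply_eq_one [Fintype m] [DecidableEq n] {M : Matrix m n 𝕜}
    (hM : Mᴴ * M = 1) (j : n) : ‖toLp 2 (Mᴴ j)‖ = 1 := by
  have h : ((∑ i, ‖M i j‖ ^ 2 : ℝ) : 𝕜) = 1 := by
    simpa [mul_apply, RCLike.conj_mul] using congrFun (congrFun hM j) j
  rw [EuclideanSpace.norm_eq, Real.sqrt_eq_one]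
  simp only [conjTranspose_apply, norm_star]
  exact_mod_cast h

variable [Fintype l] [Fintype m] [Fintype n] [Fintype p]

open scoped Matrix.Norms.L2Operator in
theorem l2_opNorm_le_one_of_conjTranspose_mul_self_eq_one [DecidableEq n] {M : Matrix m n 𝕜}
    (hM : Mᴴ * M = 1) : ‖M‖ ≤ 1 := by
  have h := l2_opNorm_conjTranspose_mul_self M
  rw [hM] at h
  have h1 : ‖(1 : Matrix n n 𝕜)‖ ≤ 1 := by
    cases isEmpty_or_nonempty n
    · simp [Subsingleton.elim (1 : Matrix n n 𝕜) 0]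
    · exact CStarRing.norm_one.le
  nlinarith [norm_nonneg M]

section Frobenius

-- `‖·‖` on matrices is the Frobenius norm here; spectral norms go through `toEuclideanLin`.
attribute [local instance] frobeniusSeminormedAddCommGroup

theorem frobenius_norm_eq_sqrt {α : Type*} [SeminormedAddCommGroup α] (A : Matrix m n α) :
    ‖A‖ = √(∑ i, ∑ j, ‖A i j‖ ^ 2) := by
  simp [frobenius_norm_def, Real.sqrt_eq_rpow]

theorem frobenius_norm_sq_eq_sum_col {α : Type*} [SeminormedAddCommGroup α] (A : Matrix m n α) :
    ‖A‖ ^ 2 = ∑ j, ‖toLp 2 (Aᵀ j)‖ ^ 2 := by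
  rw [← frobenius_norm_transpose, frobenius_norm_eq_sqrt, Real.sq_sqrt (by positivity)]
  simp [PiLp.norm_sq_eq_of_L2]

theorem frobenius_norm_vecMulVec (u : m → 𝕜) (v : n → 𝕜) :
    ‖vecMulVec u v‖ = ‖toLp 2 u‖ * ‖toLp 2 v‖ := by
  rw [frobenius_norm_eq_sqrt, EuclideanSpace.norm_eq, EuclideanSpace.norm_eq,
    ← Real.sqrt_mul (by positivity), Finset.sum_mul_sum]
  simp only [vecMulVec_apply, norm_mul, mul_pow]

theorem frobenius_norm_mul_le_l2_opNorm_mul [DecidableEq m] (A : Matrix l m 𝕜) (B : Matrix m n 𝕜) :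
    ‖A * B‖ ≤ ‖LinearMap.toContinuousLinearMap (toEuclideanLin A)‖ * ‖B‖ := by
  set f := LinearMap.toContinuousLinearMap (toEuclideanLin A)
  have hcol : ∀ j, toLp 2 ((A * B)ᵀ j) = f (toLp 2 (Bᵀ j)) := fun j => by
    simp [f, transpose_mul, mul_apply_eq_vecMul, vecMul_transpose]
  refine (pow_le_pow_iff_left₀ (norm_nonneg _) (by positivity) two_ne_zero).mp ?_
  calc ‖A * B‖ ^ 2 = ∑ j, ‖f (toLp 2 (Bᵀ j))‖ ^ 2 := by
        simp only [frobenius_norm_sq_eq_sum_col, hcol]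
    _ ≤ ∑ j, (‖f‖ * ‖toLp 2 (Bᵀ j)‖) ^ 2 :=
        Finset.sum_le_sum fun j _ => pow_le_pow_left₀ (norm_nonneg _) (f.le_opNorm _) 2
    _ = (‖f‖ * ‖B‖) ^ 2 := by
        simp only [mul_pow, frobenius_norm_sq_eq_sum_col B, Finset.mul_sum]

theorem frobenius_norm_mul_le_mul_l2_opNorm [DecidableEq m] [DecidableEq n] (A : Matrix l m 𝕜)
    (B : Matrix m n 𝕜) : ‖A * B‖ ≤ ‖A‖ * ‖LinearMap.toContinuousLinearMap (toEuclideanLin B)‖ := by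
  have hB : ‖LinearMap.toContinuousLinearMap (toEuclideanLin Bᴴ)‖ =
      ‖LinearMap.toContinuousLinearMap (toEuclideanLin B)‖ := by
    have h := l2_opNorm_conjTranspose B
    rwa [l2_opNorm_def, l2_opNorm_def, LinearEquiv.trans_apply, LinearEquiv.trans_apply] at h
  calc ‖A * B‖ = ‖Bᴴ * Aᴴ‖ := by rw [← conjTranspose_mul, frobenius_norm_conjTranspose]
    _ ≤ ‖LinearMap.toContinuousLinearMap (toEuclideanLin Bᴴ)‖ * ‖Aᴴ‖ :=
        frobenius_norm_mul_le_l2_opNorm_mul _ _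
    _ = ‖A‖ * ‖LinearMap.toContinuousLinearMap (toEuclideanLin B)‖ := by
        rw [hB, frobenius_norm_conjTranspose, mul_comm]

theorem frobenius_norm_mul_le_of_conjTranspose_mul_self_eq_one [DecidableEq m] [DecidableEq n]
    (X : Matrix l m 𝕜) {M : Matrix m n 𝕜} (hM : Mᴴ * M = 1) : ‖X * M‖ ≤ ‖X‖ := by
  have hM' : ‖LinearMap.toContinuousLinearMap (toEuclideanLin M)‖ ≤ 1 :=
    l2_opNorm_le_one_of_conjTranspose_mul_self_eq_one hM
  exact (frobenius_norm_mul_le_mul_l2_opNorm X M).trans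
    (mul_le_of_le_one_right (norm_nonneg _) hM')

theorem isGreatest_frobenius_norm_mul_mul [DecidableEq m] [DecidableEq n] [DecidableEq p]
    [Nonempty m] [Nonempty p] (B : Matrix l m 𝕜) {M : Matrix n p 𝕜} (hM : Mᴴ * M = 1) :
    IsGreatest {c | ∃ X : Matrix m n 𝕜, ‖X‖ = 1 ∧ c = ‖B * X * M‖}
      ‖LinearMap.toContinuousLinearMap (toEuclideanLin B)‖ := by
  set f := LinearMap.toContinuousLinearMap (toEuclideanLin B)
  constructor
  · obtain ⟨v, hv, hfv⟩ := f.exists_norm_eq_one_norm_apply_eq_opNorm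
    obtain ⟨j⟩ := ‹Nonempty p›
    have hBXM : B * vecMulVec (ofLp v) (Mᴴ j) * M = vecMulVec (B *ᵥ ofLp v) (Pi.single j 1) := by
      rw [mul_vecMulVec, vecMulVec_mul, ← mul_apply_eq_vecMul, hM]
      congr 1
      exact funext fun _ => one_eq_pi_single
    refine ⟨vecMulVec (ofLp v) (Mᴴ j), ?_, ?_⟩
    · rw [frobenius_norm_vecMulVec, toLp_ofLp, hv, norm_toLp_conjTranspose_apply_eq_one hM, one_mul]
    · rw [hBXM, frobenius_norm_vecMulVec, ← PiLp.single, PiLp.norm_single, norm_one, mul_one, ← hfv]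
      rfl
  · rintro c ⟨X, hX, rfl⟩
    calc ‖B * X * M‖ ≤ ‖B * X‖ := frobenius_norm_mul_le_of_conjTranspose_mul_self_eq_one _ hM
      _ ≤ ‖f‖ * ‖X‖ := frobenius_norm_mul_le_l2_opNorm_mul B X
      _ = ‖f‖ := by rw [hX, mul_one]

end Frobenius

end Matrix

theorem stmt_14_general (k p r : ℕ) (hr : 1 ≤ r) (hrp : r < p) (hrk : r ≤ k)
    (B : Matrix (Fin p) (Fin k) ℂ)
    (M : Matrix (Fin p) (Fin (p - r)) ℂ) (hM : Mᴴ * M = 1) :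
    IsGreatest
      {c : ℝ | ∃ dA : Matrix (Fin k) (Fin p) ℂ,
        Real.sqrt (∑ i, ∑ j, ‖dA i j‖ ^ 2) = 1 ∧
        c = Real.sqrt (∑ i, ∑ j, ‖(-(B * dA * M)) i j‖ ^ 2)}
      ‖LinearMap.toContinuousLinearMap (Matrix.toEuclideanLin B)‖ := by
  have : Nonempty (Fin k) := ⟨⟨0, by omega⟩⟩
  have : Nonempty (Fin (p - r)) := ⟨⟨0, by omega⟩⟩
  simpa only [frobenius_norm_eq_sqrt, Matrix.neg_apply, norm_neg] using
    isGreatest_frobenius_norm_mul_mul B hM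

/-- **Condition number of the kernel-finding problem.**
Let `A` be a `k×p` complex matrix of rank `r` (`1 ≤ r`, `r < p`, `r ≤ k`), `B`
its Moore–Penrose inverse (characterized by the four Penrose equations), and
`M` a `p×(p-r)` matrix with orthonormal columns spanning `ker A`.  The operator
norm of the condition matrix `Φ(Ȧ) = -B Ȧ M` between the Frobenius Hermitian
inner product spaces `M_{k,p}(ℂ)` and `M_{p,p-r}(ℂ)` — i.e. the greatest value
of `‖Φ(Ȧ)‖_F` over matrices `Ȧ` of Frobenius norm 1 — equals the spectral
(operator) norm `‖B‖ = ‖A†‖`. -/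
theorem stmt_14 (k p r : ℕ) (hr : 1 ≤ r) (hrp : r < p) (hrk : r ≤ k)
    (A : Matrix (Fin k) (Fin p) ℂ) (hrank : A.rank = r)
    (B : Matrix (Fin p) (Fin k) ℂ)
    (hB1 : A * B * A = A) (hB2 : B * A * B = B)
    (hB3 : (A * B)ᴴ = A * B) (hB4 : (B * A)ᴴ = B * A)
    (M : Matrix (Fin p) (Fin (p - r)) ℂ) (hM : Mᴴ * M = 1)
    (hker : Submodule.span ℂ (Set.range Mᵀ) = LinearMap.ker A.mulVecLin) :
    IsGreatest
      {c : ℝ | ∃ dA : Matrix (Fin k) (Fin p) ℂ,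
        Real.sqrt (∑ i, ∑ j, ‖dA i j‖ ^ 2) = 1 ∧
        c = Real.sqrt (∑ i, ∑ j, ‖(-(B * dA * M)) i j‖ ^ 2)}
      ‖LinearMap.toContinuousLinearMap (Matrix.toEuclideanLin B)‖ :=
  stmt_14_general k p r hr hrp hrk B M hM
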